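/- On the set of relations r : X ⟶ Y between two fixed classical structures, the binary relation defined by r ≤ s iff r = r ⋆ s (where ⋆ is convolution) is a partial order: it is reflexive, transitive and antisymmetric. -/

import Mathlib

open CategoryTheory MonoidalCategory

universe v u

variable {C : Type u} [Category.{v} C] [MonoidalCategory C] [SymmetricCategory C]

/-- A dagger structure on a symmetric monoidal category: an involutive,
identity-on-objects, contravariant functor that coherently preserves the
symmetric monoidal structure. -/
structure Dagger (C : Type u) [Category.{v} C] [MonoidalCategory C]
    [SymmetricCategory C] where
  dag : ∀ {A B : C}, (A ⟶ B) → (B ⟶ A)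
  dag_comp : ∀ {A B E : C} (f : A ⟶ B) (g : B ⟶ E), dag (f ≫ g) = dag g ≫ dag f
  dag_id : ∀ A : C, dag (𝟙 A) = 𝟙 A
  dag_dag : ∀ {A B : C} (f : A ⟶ B), dag (dag f) = f
  dag_tensor : ∀ {A B A' B' : C} (f : A ⟶ B) (g : A' ⟶ B'),
    dag (f ⊗ₘ g) = dag f ⊗ₘ dag g
  dag_assoc : ∀ A B E : C, dag (α_ A B E).hom = (α_ A B E).inv
  dag_lUnit : ∀ A : C, dag (λ_ A).hom = (λ_ A).inv
  dag_rUnit : ∀ A : C, dag (ρ_ A).hom = (ρ_ A).inv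
  dag_braid : ∀ A B : C, dag (β_ A B).hom = (β_ A B).inv

/-- Positivity of an endomorphism: `e = g† ≫ g` for some `g : W ⟶ A`. -/
def Dagger.IsPositive (D : Dagger C) {A : C} (e : A ⟶ A) : Prop :=
  ∃ (W : C) (g : W ⟶ A), e = D.dag g ≫ g

/-- A classical structure: a commutative monoid object which, together with the
daggers of its multiplication and unit, is a special Frobenius algebra. -/
structure ClassicalStructure (D : Dagger C) (X : C) where
  mul : X ⊗ X ⟶ X
  unit : 𝟙_ C ⟶ X
  mul_assoc' : (α_ X X X).hom ≫ (𝟙 X ⊗ₘ mul) ≫ mul = (mul ⊗ₘ 𝟙 X) ≫ mul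
  one_mul' : (unit ⊗ₘ 𝟙 X) ≫ mul = (λ_ X).hom
  mul_one' : (𝟙 X ⊗ₘ unit) ≫ mul = (ρ_ X).hom
  mul_comm' : (β_ X X).hom ≫ mul = mul
  frobenius' : (𝟙 X ⊗ₘ D.dag mul) ≫ (α_ X X X).inv ≫ (mul ⊗ₘ 𝟙 X) = mul ≫ D.dag mul
  special' : D.dag mul ≫ mul = 𝟙 X

namespace ClassicalStructure

variable {D : Dagger C}

/-- The comultiplication `Δ := ∇†`. -/
def comul {X : C} (S : ClassicalStructure D X) : X ⟶ X ⊗ X := D.dag S.mul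

/-- The counit `⊤ := ⊥†`. -/
def counit {X : C} (S : ClassicalStructure D X) : X ⟶ 𝟙_ C := D.dag S.unit

/-- The induced Bell state `η := ⊥ ≫ Δ`. -/
def eta {X : C} (S : ClassicalStructure D X) : 𝟙_ C ⟶ X ⊗ X := S.unit ≫ S.comul

/-- The induced Bell costate `ε := ∇ ≫ ⊤`. -/
def eps {X : C} (S : ClassicalStructure D X) : X ⊗ X ⟶ 𝟙_ C := S.mul ≫ S.counit

/-- The decoherence `Ξ := ∇ ≫ Δ`. -/
def Xi {X : C} (S : ClassicalStructure D X) : X ⊗ X ⟶ X ⊗ X := S.mul ≫ S.comul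

end ClassicalStructure

/-- A morphism `f : X ⟶ Y` between classical structures is classical if
`(Δ_X ⊗ 𝟙_Y) ≫ (𝟙_X ⊗ f ⊗ 𝟙_Y) ≫ (𝟙_X ⊗ ∇_Y)` is positive. -/
def IsClassical {X Y : C} (D : Dagger C) (XS : ClassicalStructure D X)
    (YS : ClassicalStructure D Y) (f : X ⟶ Y) : Prop :=
  D.IsPositive ((XS.comul ⊗ₘ 𝟙 Y) ≫ ((𝟙 X ⊗ₘ f) ⊗ₘ 𝟙 Y) ≫ (α_ X Y Y).hom ≫ (𝟙 X ⊗ₘ YS.mul))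

/-- The conjugate `f_* := (η_Y ⊗ 𝟙_X) ≫ (𝟙_Y ⊗ f† ⊗ 𝟙_X) ≫ (𝟙_Y ⊗ ε_X)`. -/
def conjugate {X Y : C} (D : Dagger C) (XS : ClassicalStructure D X)
    (YS : ClassicalStructure D Y) (f : X ⟶ Y) : X ⟶ Y :=
  (λ_ X).inv ≫ (YS.eta ⊗ₘ 𝟙 X) ≫ (α_ Y Y X).hom ≫ (𝟙 Y ⊗ₘ (D.dag f ⊗ₘ 𝟙 X)) ≫
    (𝟙 Y ⊗ₘ XS.eps) ≫ (ρ_ Y).hom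

/-- The convolution `f ⋆ g := Δ_X ≫ (f_* ⊗ g) ≫ ∇_Y`. -/
def convol {X Y : C} (D : Dagger C) (XS : ClassicalStructure D X)
    (YS : ClassicalStructure D Y) (f g : X ⟶ Y) : X ⟶ Y :=
  XS.comul ≫ (conjugate D XS YS f ⊗ₘ g) ≫ YS.mul

/-- A relation is a convolution-idempotent: `r = r ⋆ r`. -/
def IsRelation {X Y : C} (D : Dagger C) (XS : ClassicalStructure D X)
    (YS : ClassicalStructure D Y) (r : X ⟶ Y) : Prop :=
  r = convol D XS YS r r

/-- Single-valuedness: `r ≫ Δ_Y = Δ_X ≫ (r ⊗ r)`. -/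
def SingleValued {X Y : C} (D : Dagger C) (XS : ClassicalStructure D X)
    (YS : ClassicalStructure D Y) (r : X ⟶ Y) : Prop :=
  r ≫ YS.comul = XS.comul ≫ (r ⊗ₘ r)

/-- Totality: `r ≫ ⊤_Y = ⊤_X`. -/
def TotalRel {X Y : C} (D : Dagger C) (XS : ClassicalStructure D X)
    (YS : ClassicalStructure D Y) (r : X ⟶ Y) : Prop :=
  r ≫ YS.counit = XS.counit

/-- A function is a single-valued total relation. -/
def IsFunctionRel {X Y : C} (D : Dagger C) (XS : ClassicalStructure D X)
    (YS : ClassicalStructure D Y) (r : X ⟶ Y) : Prop :=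
  IsRelation D XS YS r ∧ SingleValued D XS YS r ∧ TotalRel D XS YS r

/-- The middle-four interchange `(X ⊗ Y) ⊗ (Z ⊗ W) ⟶ (X ⊗ Z) ⊗ (Y ⊗ W)`
built from associators and the braiding. -/
def midSwap (X Y Z W : C) : (X ⊗ Y) ⊗ (Z ⊗ W) ⟶ (X ⊗ Z) ⊗ (Y ⊗ W) :=
  (α_ X Y (Z ⊗ W)).hom ≫ (𝟙 X ⊗ₘ (α_ Y Z W).inv) ≫ (𝟙 X ⊗ₘ ((β_ Y Z).hom ⊗ₘ 𝟙 W)) ≫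
    (𝟙 X ⊗ₘ (α_ Z Y W).hom) ≫ (α_ X Z (Y ⊗ W)).inv

/-- The multiplication `∇_{X⊗Y} := (𝟙_X ⊗ β_{Y,X} ⊗ 𝟙_Y) ≫ (∇_X ⊗ ∇_Y)` of the
tensor of two classical structures. -/
def tensorMul {X Y : C} {D : Dagger C} (XS : ClassicalStructure D X)
    (YS : ClassicalStructure D Y) : (X ⊗ Y) ⊗ (X ⊗ Y) ⟶ X ⊗ Y :=
  midSwap X Y X Y ≫ (XS.mul ⊗ₘ YS.mul)

/-- The unit `⊥_{X⊗Y} := ⊥_X ⊗ ⊥_Y` of the tensor of two classical structures. -/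
def tensorUnit'' {X Y : C} {D : Dagger C} (XS : ClassicalStructure D X)
    (YS : ClassicalStructure D Y) : 𝟙_ C ⟶ X ⊗ Y :=
  (λ_ (𝟙_ C)).inv ≫ (XS.unit ⊗ₘ YS.unit)

/-- Complete positivity of `g : X ⊗ X ⟶ Y ⊗ Y` relative to the self-dual compact
structures induced by the classical structures:
`(𝟙_X ⊗ η_X ⊗ 𝟙_Y) ≫ (𝟙_X ⊗ g ⊗ 𝟙_Y) ≫ (𝟙_{X⊗Y} ⊗ ε_Y)` is positive. -/
def IsCP {X Y : C} (D : Dagger C) (XS : ClassicalStructure D X)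
    (YS : ClassicalStructure D Y) (g : X ⊗ X ⟶ Y ⊗ Y) : Prop :=
  D.IsPositive ((𝟙 X ⊗ₘ (λ_ Y).inv) ≫ (𝟙 X ⊗ₘ (XS.eta ⊗ₘ 𝟙 Y)) ≫ (𝟙 X ⊗ₘ (g ⊗ₘ 𝟙 Y)) ≫
    (𝟙 X ⊗ₘ (α_ Y Y Y).hom) ≫ (α_ X Y (Y ⊗ Y)).inv ≫ (𝟙 (X ⊗ Y) ⊗ₘ YS.eps) ≫
    (ρ_ (X ⊗ Y)).hom)

/-- A stochastic morphism: classical and total. -/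
def Stochastic {X Y : C} (D : Dagger C) (XS : ClassicalStructure D X)
    (YS : ClassicalStructure D Y) (s : X ⟶ Y) : Prop :=
  IsClassical D XS YS s ∧ TotalRel D XS YS s

/-- A doubly stochastic morphism: both `s` and `s†` are stochastic. -/
def DoublyStochastic {X Y : C} (D : Dagger C) (XS : ClassicalStructure D X)
    (YS : ClassicalStructure D Y) (s : X ⟶ Y) : Prop :=
  Stochastic D XS YS s ∧ Stochastic D YS XS (D.dag s)

/-!
A relation is self-conjugate: conjugation is an involution and is multiplicative for the product
`a · b := Δ ≫ (a ⊗ b) ≫ ∇`, so from `r = r_* · r` one gets `r_* = r_** · r_* = r · r_* = r`.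
Hence `r ⋆ s = r · s` on relations, and `·` is commutative and associative, so `r ≤ s` is the
order of a meet-semilattice. Both properties of conjugation are checked on names `η ≫ (1 ⊗ f)`,
which determine `f` by the snake equations; multiplicativity comes down to spider fusion of two
cups.
-/

lemma midSwap_eq_tensorμ (A B P Q : C) : midSwap A B P Q = tensorμ A B P Q := by
  simp [midSwap, tensorμ]

lemma states_comm {M : Type*} [Category M] [MonoidalCategory M] {P Q : M}
    (m : 𝟙_ M ⟶ P) (n : 𝟙_ M ⟶ Q) :
    m ≫ (ρ_ P).inv ≫ P ◁ n = n ≫ (λ_ Q).inv ≫ m ▷ Q := by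
  calc _ = (λ_ (𝟙_ M)).inv ≫ m ▷ _ ≫ P ◁ n := by monoidal
    _ = (λ_ (𝟙_ M)).inv ≫ _ ◁ n ≫ m ▷ Q := by rw [whisker_exchange]
    _ = _ := by monoidal

/-- `tensorμ` crosses `B` over the first leg of `w` only; crossing `B` over all of `w` is free,
leaving an uncrossing of `B` and the second leg. -/
lemma whiskerLeft_comp_tensorμ {M : Type*} [Category M] [MonoidalCategory M]
    [BraidedCategory M] {A B P Q : M} (w : 𝟙_ M ⟶ P ⊗ Q) :
    (A ⊗ B) ◁ w ≫ tensorμ A B P Q =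
      (ρ_ (A ⊗ B)).hom ≫ A ◁ ((λ_ B).inv ≫ w ▷ B ≫ (α_ P Q B).hom ≫ P ◁ (β_ B Q).inv) ≫
        (α_ A P (B ⊗ Q)).inv := by
  have hexagon : (β_ B P).hom ▷ Q = (α_ B P Q).hom ≫ (β_ B (P ⊗ Q)).hom ≫ (α_ P Q B).hom ≫
      P ◁ (β_ B Q).inv ≫ (α_ P B Q).inv := by
    simp [BraidedCategory.braiding_tensor_right_hom]
  have slide : B ◁ w ≫ (β_ B (P ⊗ Q)).hom = (ρ_ B).hom ≫ (λ_ B).inv ≫ w ▷ B := by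
    rw [BraidedCategory.braiding_naturality_right, braiding_tensorUnit_right, Category.assoc]
  calc _ = (α_ A B _).hom ≫ A ◁ (B ◁ w ≫ (β_ B (P ⊗ Q)).hom ≫ (α_ P Q B).hom ≫
          P ◁ (β_ B Q).inv) ≫ (α_ A P (B ⊗ Q)).inv := by
        simp only [tensorμ, hexagon]; monoidal
    _ = _ := by rw [reassoc_of% slide]; monoidal

namespace Dagger

variable (D : Dagger C)

lemma dag_associator_inv (A B E : C) : D.dag (α_ A B E).inv = (α_ A B E).hom := by
  rw [← D.dag_assoc, D.dag_dag]

lemma dag_leftUnitor_inv (A : C) : D.dag (λ_ A).inv = (λ_ A).hom := by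
  rw [← D.dag_lUnit, D.dag_dag]

lemma dag_whiskerLeft (A : C) {B E : C} (f : B ⟶ E) : D.dag (A ◁ f) = A ◁ D.dag f := by
  rw [← id_tensorHom, D.dag_tensor, D.dag_id, id_tensorHom]

lemma dag_whiskerRight {B E : C} (f : B ⟶ E) (A : C) : D.dag (f ▷ A) = D.dag f ▷ A := by
  rw [← tensorHom_id, D.dag_tensor, D.dag_id, tensorHom_id]

end Dagger

namespace ClassicalStructure

variable {D : Dagger C} {A : C} (S : ClassicalStructure D A)

lemma dag_comul : D.dag S.comul = S.mul := D.dag_dag _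

lemma dag_eta : D.dag S.eta = S.eps := by
  rw [eta, eps, D.dag_comp, dag_comul, counit]

lemma dag_eps : D.dag S.eps = S.eta := by
  rw [eta, eps, D.dag_comp, counit, D.dag_dag, comul]

lemma mul_assoc : (α_ A A A).hom ≫ A ◁ S.mul ≫ S.mul = S.mul ▷ A ≫ S.mul := by
  simpa using S.mul_assoc'

lemma one_mul : S.unit ▷ A ≫ S.mul = (λ_ A).hom := by simpa using S.one_mul'

lemma mul_one : A ◁ S.unit ≫ S.mul = (ρ_ A).hom := by simpa using S.mul_one'

lemma frobenius : A ◁ S.comul ≫ (α_ A A A).inv ≫ S.mul ▷ A = S.mul ≫ S.comul := by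
  simpa [comul] using S.frobenius'

lemma comul_braiding : S.comul ≫ (β_ A A).hom = S.comul := by
  simpa [comul, D.dag_comp, D.dag_braid, ← SymmetricCategory.braiding_swap_eq_inv_braiding] using
    congrArg D.dag S.mul_comm'

lemma comul_coassoc : S.comul ≫ A ◁ S.comul ≫ (α_ A A A).inv = S.comul ≫ S.comul ▷ A := by
  simpa [comul, D.dag_comp, D.dag_whiskerLeft, D.dag_whiskerRight, D.dag_assoc] using
    congrArg D.dag S.mul_assoc

lemma comul_counit : S.comul ≫ A ◁ S.counit = (ρ_ A).inv := by
  simpa [comul, counit, D.dag_comp, D.dag_whiskerLeft, D.dag_rUnit] using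
    congrArg D.dag S.mul_one

lemma counit_comul : S.comul ≫ S.counit ▷ A = (λ_ A).inv := by
  simpa [comul, counit, D.dag_comp, D.dag_whiskerRight, D.dag_lUnit] using
    congrArg D.dag S.one_mul

lemma frobenius_right : S.comul ▷ A ≫ (α_ A A A).hom ≫ A ◁ S.mul = S.mul ≫ S.comul := by
  simpa [comul, D.dag_comp, D.dag_whiskerLeft, D.dag_whiskerRight, D.dag_associator_inv,
    D.dag_dag] using congrArg D.dag S.frobenius

lemma eta_braiding : S.eta ≫ (β_ A A).hom = S.eta := by
  rw [eta, Category.assoc, S.comul_braiding]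

lemma whiskerLeft_eta_mul :
    A ◁ S.eta ≫ (α_ A A A).inv ≫ S.mul ▷ A = (ρ_ A).hom ≫ S.comul := by
  rw [eta, MonoidalCategory.whiskerLeft_comp, Category.assoc, S.frobenius, ← Category.assoc,
    S.mul_one]

lemma eta_whiskerRight_mul :
    S.eta ▷ A ≫ (α_ A A A).hom ≫ A ◁ S.mul = (λ_ A).hom ≫ S.comul := by
  rw [eta, comp_whiskerRight, Category.assoc, S.frobenius_right, ← Category.assoc, S.one_mul]

lemma evaluation_coevaluation :
    S.eta ▷ A ≫ (α_ A A A).hom ≫ A ◁ S.eps = (λ_ A).hom ≫ (ρ_ A).inv := by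
  rw [eps, MonoidalCategory.whiskerLeft_comp, reassoc_of% S.eta_whiskerRight_mul, S.comul_counit]

lemma coevaluation_evaluation :
    A ◁ S.eta ≫ (α_ A A A).inv ≫ S.eps ▷ A = (ρ_ A).hom ≫ (λ_ A).inv := by
  rw [eps, comp_whiskerRight, reassoc_of% S.whiskerLeft_eta_mul, S.counit_comul]

/-- Spider fusion: multiplying a leg of one cup with a leg of another leaves a cup with one leg
copied. -/
lemma eta_tensor_eta_mul_whiskerRight :
    (λ_ (𝟙_ C)).inv ≫ (S.eta ⊗ₘ S.eta) ≫ tensorμ A A A A ≫ S.mul ▷ (A ⊗ A) =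
      S.eta ≫ A ◁ S.comul := by
  calc _ = S.eta ≫ (ρ_ (A ⊗ A)).inv ≫ (A ⊗ A) ◁ S.eta ≫ tensorμ A A A A ≫
          S.mul ▷ (A ⊗ A) := by
        rw [MonoidalCategory.tensorHom_def]; monoidal
    _ = S.eta ≫ A ◁ ((λ_ A).inv ≫ S.eta ▷ A ≫ (α_ A A A).hom) ≫ (α_ A A (A ⊗ A)).inv ≫
          S.mul ▷ (A ⊗ A) ≫ A ◁ (β_ A A).inv := by
        rw [reassoc_of% (whiskerLeft_comp_tensorμ S.eta), ← whisker_exchange]; monoidal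
    _ = S.eta ≫ ((ρ_ A).inv ≫ A ◁ S.eta ≫ (α_ A A A).inv ≫ S.mul ▷ A) ▷ A ≫
          (α_ A A A).hom ≫ A ◁ (β_ A A).inv := by monoidal
    _ = S.eta ≫ A ◁ S.comul := by
        rw [S.whiskerLeft_eta_mul, Iso.inv_hom_id_assoc, eta, Category.assoc,
          ← reassoc_of% S.comul_coassoc, Iso.inv_hom_id_assoc,
          ← MonoidalCategory.whiskerLeft_comp,
          ← SymmetricCategory.braiding_swap_eq_inv_braiding, S.comul_braiding, Category.assoc]

lemma eta_tensor_eta_whiskerLeft_mul :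
    (λ_ (𝟙_ C)).inv ≫ (S.eta ⊗ₘ S.eta) ≫ tensorμ A A A A ≫ (A ⊗ A) ◁ S.mul =
      S.eta ≫ S.comul ▷ A := by
  simpa only [Category.assoc, BraidedCategory.braiding_naturality_left,
    BraidedCategory.braiding_naturality_right, SymmetricCategory.tensorμ_braid_swap_assoc,
    MonoidalCategory.tensorHom_comp_tensorHom_assoc, eta_braiding, reassoc_of% S.eta_braiding]
    using S.eta_tensor_eta_mul_whiskerRight =≫ (β_ A (A ⊗ A)).hom

def name {B : C} (f : A ⟶ B) : 𝟙_ C ⟶ A ⊗ B := S.eta ≫ A ◁ f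

def unname {B : C} (v : 𝟙_ C ⟶ A ⊗ B) : A ⟶ B :=
  (ρ_ A).inv ≫ A ◁ v ≫ (α_ A A B).inv ≫ S.eps ▷ B ≫ (λ_ B).hom

lemma unname_name {B : C} (f : A ⟶ B) : S.unname (S.name f) = f := by
  calc _ = (ρ_ A).inv ≫ A ◁ S.eta ≫ (α_ A A A).inv ≫ (A ⊗ A) ◁ f ≫ S.eps ▷ B ≫
          (λ_ B).hom := by
        simp only [unname, name]; monoidal
    _ = ((ρ_ A).inv ≫ A ◁ S.eta ≫ (α_ A A A).inv ≫ S.eps ▷ A) ≫ (λ_ A).hom ≫ f := by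
        rw [whisker_exchange_assoc]; monoidal
    _ = f := by rw [S.coevaluation_evaluation]; simp

lemma name_injective {B : C} : Function.Injective (S.name (B := B)) :=
  Function.LeftInverse.injective S.unname_name

lemma name_unname {B : C} (v : 𝟙_ C ⟶ A ⊗ B) : S.name (S.unname v) = v := by
  calc _ = (S.eta ≫ (ρ_ _).inv ≫ (A ⊗ A) ◁ v) ≫ (α_ A A (A ⊗ B)).hom ≫
        A ◁ ((α_ A A B).inv ≫ S.eps ▷ B ≫ (λ_ B).hom) := by
        simp only [name, unname]; monoidal
    _ = v ≫ (λ_ _).inv ≫ S.eta ▷ (A ⊗ B) ≫ (α_ A A (A ⊗ B)).hom ≫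
        A ◁ ((α_ A A B).inv ≫ S.eps ▷ B ≫ (λ_ B).hom) := by
        rw [states_comm]; simp only [Category.assoc]
    _ = v ≫ ((λ_ A).inv ≫ (S.eta ▷ A ≫ (α_ A A A).hom ≫ A ◁ S.eps) ≫ (ρ_ A).hom) ▷ B := by
        monoidal
    _ = v := by rw [S.evaluation_coevaluation]; simp

lemma eta_comp_whiskerRight {B : C} (f : A ⟶ B) :
    S.eta ≫ f ▷ A = S.name f ≫ (β_ A B).hom := by
  rw [name, Category.assoc, BraidedCategory.braiding_naturality_right, ← Category.assoc,
    S.eta_braiding]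

lemma name_bend {M : C} (v : 𝟙_ C ⟶ M ⊗ A) :
    S.name ((λ_ A).inv ≫ v ▷ A ≫ (α_ M A A).hom ≫ M ◁ S.eps ≫ (ρ_ M).hom) =
      v ≫ (β_ M A).hom := by
  have h : S.eta ≫ ((λ_ A).inv ≫ v ▷ A ≫ (α_ M A A).hom ≫ M ◁ S.eps ≫ (ρ_ M).hom) ▷ A =
      v := by
    calc _ = (S.eta ≫ (λ_ _).inv ≫ v ▷ (A ⊗ A)) ≫ (α_ M A (A ⊗ A)).hom ≫
          M ◁ ((α_ A A A).inv ≫ S.eps ▷ A ≫ (λ_ A).hom) := by monoidal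
      _ = v ≫ (ρ_ _).inv ≫ (M ⊗ A) ◁ S.eta ≫ (α_ M A (A ⊗ A)).hom ≫
          M ◁ ((α_ A A A).inv ≫ S.eps ▷ A ≫ (λ_ A).hom) := by
          rw [← states_comm]; simp only [Category.assoc]
      _ = v ≫ M ◁ ((ρ_ A).inv ≫ (A ◁ S.eta ≫ (α_ A A A).inv ≫ S.eps ▷ A) ≫
          (λ_ A).hom) := by monoidal
      _ = v := by rw [S.coevaluation_evaluation]; simp
  rw [S.eta_comp_whiskerRight] at h
  rw [← cancel_mono (β_ A M).hom, h, Category.assoc, SymmetricCategory.symmetry,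
    Category.comp_id]

end ClassicalStructure

section Relations

variable {D : Dagger C} {X Y : C} (XS : ClassicalStructure D X) (YS : ClassicalStructure D Y)

def schur (a b : X ⟶ Y) : X ⟶ Y := XS.comul ≫ (a ⊗ₘ b) ≫ YS.mul

lemma convol_eq_schur (a b : X ⟶ Y) :
    convol D XS YS a b = schur XS YS (conjugate D XS YS a) b := rfl

lemma schur_comm (a b : X ⟶ Y) : schur XS YS a b = schur XS YS b a := by
  rw [schur, ← YS.mul_comm', BraidedCategory.braiding_naturality_assoc,
    reassoc_of% XS.comul_braiding, schur]

lemma schur_assoc (a b c : X ⟶ Y) :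
    schur XS YS (schur XS YS a b) c = schur XS YS a (schur XS YS b c) := by
  calc _ = XS.comul ≫ XS.comul ▷ X ≫ ((a ⊗ₘ b) ⊗ₘ c) ≫ YS.mul ▷ Y ≫ YS.mul := by
        simp only [schur, ← tensorHom_id, MonoidalCategory.tensorHom_comp_tensorHom_assoc,
          Category.id_comp, Category.comp_id]
    _ = XS.comul ≫ X ◁ XS.comul ≫ (a ⊗ₘ (b ⊗ₘ c)) ≫ Y ◁ YS.mul ≫ YS.mul := by
        rw [← reassoc_of% XS.comul_coassoc, ← associator_inv_naturality_assoc, ← YS.mul_assoc,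
          Iso.inv_hom_id_assoc]
    _ = _ := by
        simp only [schur, ← id_tensorHom, MonoidalCategory.tensorHom_comp_tensorHom_assoc,
          Category.id_comp, Category.comp_id]

lemma dag_schur (a b : X ⟶ Y) :
    D.dag (schur XS YS a b) = schur YS XS (D.dag a) (D.dag b) := by
  simp only [schur, D.dag_comp, D.dag_tensor, ClassicalStructure.comul, D.dag_dag,
    Category.assoc]

lemma name_conjugate (f : X ⟶ Y) :
    XS.name (conjugate D XS YS f) = YS.eta ≫ D.dag f ▷ Y := by
  have bend : conjugate D XS YS f =
      (λ_ X).inv ≫ YS.name (D.dag f) ▷ X ≫ (α_ Y X X).hom ≫ Y ◁ XS.eps ≫ (ρ_ Y).hom := by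
    simp only [conjugate, ClassicalStructure.name, id_tensorHom, tensorHom_id]; monoidal
  rw [bend, XS.name_bend, YS.eta_comp_whiskerRight]

lemma dag_conjugate (f : X ⟶ Y) :
    D.dag (conjugate D XS YS f) = YS.unname (XS.eta ≫ f ▷ X) := by
  simp only [conjugate, ClassicalStructure.unname, D.dag_comp, D.dag_whiskerLeft,
    D.dag_whiskerRight, D.dag_dag, D.dag_assoc, D.dag_leftUnitor_inv, D.dag_rUnit,
    ClassicalStructure.dag_eta, ClassicalStructure.dag_eps, id_tensorHom, tensorHom_id]
  monoidal

lemma conjugate_conjugate (f : X ⟶ Y) : conjugate D XS YS (conjugate D XS YS f) = f := by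
  apply XS.name_injective
  rw [name_conjugate, dag_conjugate, YS.eta_comp_whiskerRight, YS.name_unname,
    XS.eta_comp_whiskerRight, Category.assoc, SymmetricCategory.symmetry, Category.comp_id]

lemma name_schur (a b : X ⟶ Y) :
    XS.name (schur XS YS a b) =
      (λ_ _).inv ≫ (XS.name a ⊗ₘ XS.name b) ≫ tensorMul XS YS := by
  calc XS.name (schur XS YS a b)
      = ((λ_ _).inv ≫ (XS.eta ⊗ₘ XS.eta) ≫ tensorμ X X X X ≫ XS.mul ▷ (X ⊗ X)) ≫
          X ◁ ((a ⊗ₘ b) ≫ YS.mul) := by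
        rw [XS.eta_tensor_eta_mul_whiskerRight, ClassicalStructure.name, schur, Category.assoc,
          MonoidalCategory.whiskerLeft_comp]
    _ = _ := by
        simp only [ClassicalStructure.name, tensorMul, midSwap_eq_tensorμ, ← id_tensorHom,
          ← tensorHom_id, ← MonoidalCategory.tensorHom_comp_tensorHom, Category.assoc,
          tensorμ_natural_assoc]
        rw [MonoidalCategory.tensorHom_comp_tensorHom, MonoidalCategory.tensorHom_comp_tensorHom,
          MonoidalCategory.id_tensorHom_id, Category.id_comp, Category.id_comp, Category.comp_id]

lemma conjugate_schur (a b : X ⟶ Y) :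
    conjugate D XS YS (schur XS YS a b) =
      schur XS YS (conjugate D XS YS a) (conjugate D XS YS b) := by
  apply XS.name_injective
  rw [name_schur, name_conjugate, name_conjugate, name_conjugate, dag_schur]
  calc _ = ((λ_ _).inv ≫ (YS.eta ⊗ₘ YS.eta) ≫ tensorμ Y Y Y Y ≫ (Y ⊗ Y) ◁ YS.mul) ≫
        ((D.dag a ⊗ₘ D.dag b) ≫ XS.mul) ▷ Y := by
        rw [YS.eta_tensor_eta_whiskerLeft_mul, schur, Category.assoc, comp_whiskerRight]
    _ = _ := by
        simp only [tensorMul, midSwap_eq_tensorμ, ← id_tensorHom, ← tensorHom_id,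
          ← MonoidalCategory.tensorHom_comp_tensorHom, Category.assoc, tensorμ_natural_assoc]
        rw [MonoidalCategory.tensorHom_comp_tensorHom, MonoidalCategory.tensorHom_comp_tensorHom,
          MonoidalCategory.id_tensorHom_id, Category.id_comp, Category.id_comp, Category.comp_id]

variable {XS YS}

lemma IsRelation.conjugate_eq {r : X ⟶ Y} (hr : IsRelation D XS YS r) :
    conjugate D XS YS r = r := by
  have h : conjugate D XS YS r = schur XS YS r (conjugate D XS YS r) := by
    conv_lhs => rw [hr, convol_eq_schur, conjugate_schur, conjugate_conjugate]
  rw [h, schur_comm, ← convol_eq_schur, ← hr]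

lemma IsRelation.convol_eq {r : X ⟶ Y} (hr : IsRelation D XS YS r) (s : X ⟶ Y) :
    convol D XS YS r s = schur XS YS r s := by
  rw [convol_eq_schur, hr.conjugate_eq]

end Relations

/-- on relations `X ⟶ Y`, the relation `r ≤ s iff r = r ⋆ s`
is a partial order: reflexive, transitive and antisymmetric. -/
theorem relation_partial_order {X Y : C} (D : Dagger C)
    (XS : ClassicalStructure D X) (YS : ClassicalStructure D Y) :
    (∀ r : X ⟶ Y, IsRelation D XS YS r → r = convol D XS YS r r) ∧
    (∀ r s t : X ⟶ Y, IsRelation D XS YS r → IsRelation D XS YS s →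
      IsRelation D XS YS t →
      r = convol D XS YS r s → s = convol D XS YS s t → r = convol D XS YS r t) ∧
    (∀ r s : X ⟶ Y, IsRelation D XS YS r → IsRelation D XS YS s →
      r = convol D XS YS r s → s = convol D XS YS s r → r = s) := by
  refine ⟨fun r hr => hr, ?_, ?_⟩
  · intro r s t hr hs _ hrs hst
    rw [hr.convol_eq] at hrs ⊢
    rw [hs.convol_eq] at hst
    calc r = schur XS YS r s := hrs
      _ = schur XS YS (schur XS YS r s) t := by rw [schur_assoc, ← hst]
      _ = schur XS YS r t := by rw [← hrs]
  · intro r s hr hs hrs hsr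
    rw [hr.convol_eq] at hrs
    rw [hs.convol_eq] at hsr
    rw [hrs, schur_comm, ← hsr]
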